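/- Let G = (V, E, w) be an influence graph with deterministic arcs E_det := { e ∈ E : w(e) = 1 }, let A ⊆ V be a target set, and let X ⊆ V. Then C_A(G, X) = 0 if and only if A ⊆ reach_{E_det}(X) and reach_E(X) ⊆ A. (This characterization underlies the linear-time algorithm for Effectors with cost c = 0.) -/

import Mathlib

/-- The set of nodes reachable from some node of `X` by a directed path
using only arcs of `S`. -/
def reach {V : Type*} (S : Set (V × V)) (X : Set V) : Set V :=
  {v | ∃ x ∈ X, Relation.ReflTransGen (fun a b : V => (a, b) ∈ S) x v}

/-- The live-arc probability of the arc subset `S ⊆ E`: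
`P(S) = (∏_{e ∈ S} w(e)) · (∏_{e ∈ E∖S} (1 − w(e)))`. -/
def liveP {V : Type*} [DecidableEq V] (w : V × V → ℚ) (E S : Finset (V × V)) : ℚ :=
  (∏ e ∈ S, w e) * ∏ e ∈ E \ S, (1 - w e)

open Classical in
/-- The activation probability `p(v|X)` of node `v` for effector set `X`. -/
noncomputable def actProb {V : Type*} [Fintype V] [DecidableEq V]
    (w : V × V → ℚ) (E : Finset (V × V)) (X : Set V) (v : V) : ℚ :=
  ∑ S ∈ E.powerset.filter (fun T : Finset (V × V) => v ∈ reach (↑T : Set (V × V)) X),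
    liveP w E S

/-- The cost `C_A(G, X) = ∑_{v ∈ A} (1 − p(v|X)) + ∑_{v ∈ V∖A} p(v|X)`. -/
noncomputable def cost {V : Type*} [Fintype V] [DecidableEq V]
    (w : V × V → ℚ) (E : Finset (V × V)) (A : Finset V) (X : Set V) : ℚ :=
  (∑ v ∈ A, (1 - actProb w E X v)) + ∑ v ∈ Aᶜ, actProb w E X v

/-!
Under the live-arc measure a subset `S ⊆ E` has positive probability exactly when it contains
every deterministic arc (those with `w e = 1`). Hence `p(v|X) = 1` iff `v` is reached in every
such `S`, by monotonicity iff it is reached through the deterministic arcs alone; and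
`p(v|X) = 0` iff `v` is reached in no such `S`, iff it is not reached using all of `E`.
The cost is a sum of nonnegative terms, so it vanishes iff every target has `p = 1` and every
non-target has `p = 0`.
-/

open Finset

section NonnegSum

variable {ι M : Type*} [AddCancelCommMonoid M] [PartialOrder M] [AddLeftMono M]
  {s : Finset ι} {f : ι → M} (p : ι → Prop) [DecidablePred p]

lemma Finset.sum_filter_eq_zero_iff_of_nonneg (hf : ∀ i ∈ s, 0 ≤ f i) :
    ∑ i ∈ s with p i, f i = 0 ↔ ∀ i ∈ s, f i ≠ 0 → ¬ p i := by
  rw [sum_eq_zero_iff_of_nonneg fun i hi => hf i (mem_filter.1 hi).1]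
  simp only [mem_filter, and_imp]
  exact forall₂_congr fun i _ => by tauto

lemma Finset.sum_filter_eq_sum_iff_of_nonneg (hf : ∀ i ∈ s, 0 ≤ f i) :
    ∑ i ∈ s with p i, f i = ∑ i ∈ s, f i ↔ ∀ i ∈ s, f i ≠ 0 → p i := by
  rw [← sum_filter_add_sum_filter_not s p f, left_eq_add,
    sum_filter_eq_zero_iff_of_nonneg _ hf]
  simp only [not_not]

end NonnegSum

lemma reach_mono {V : Type*} {S T : Set (V × V)} (h : S ⊆ T) (X : Set V) :
    reach S X ⊆ reach T X := by
  rintro v ⟨x, hx, hr⟩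
  exact ⟨x, hx, Relation.ReflTransGen.mono (fun _ _ hab => h hab) x v hr⟩

section LiveArc

variable {V : Type*} [DecidableEq V] {w : V × V → ℚ} {E : Finset (V × V)}

lemma liveP_nonneg (hw : ∀ e ∈ E, 0 ≤ w e ∧ w e ≤ 1) : ∀ S ∈ E.powerset, 0 ≤ liveP w E S :=
  fun _ hS => mul_nonneg (prod_nonneg fun e he => (hw e (mem_powerset.1 hS he)).1)
    (prod_nonneg fun e he => sub_nonneg.2 (hw e (mem_sdiff.1 he).1).2)

lemma liveP_ne_zero_iff (hw : ∀ e ∈ E, w e ≠ 0) {S : Finset (V × V)} (hS : S ⊆ E) :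
    liveP w E S ≠ 0 ↔ E.filter (fun e => w e = 1) ⊆ S := by
  have hSpos : ∏ e ∈ S, w e ≠ 0 := prod_ne_zero_iff.2 fun e he => hw e (hS he)
  rw [liveP, mul_ne_zero_iff, and_iff_right hSpos, prod_ne_zero_iff]
  simp only [mem_sdiff, sub_ne_zero, subset_iff, mem_filter, and_imp]
  exact forall_congr' fun e => by tauto

variable (w E)

lemma sum_liveP : ∑ S ∈ E.powerset, liveP w E S = 1 := by
  simpa [liveP] using (prod_add w (fun e => 1 - w e) E).symm

end LiveArc

section ActProb

variable {V : Type*} [Fintype V] [DecidableEq V] {w : V × V → ℚ} {E : Finset (V × V)}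
  (X : Set V) (v : V)

lemma actProb_nonneg (hw : ∀ e ∈ E, 0 ≤ w e ∧ w e ≤ 1) : 0 ≤ actProb w E X v := by
  classical
  exact sum_nonneg fun S hS => liveP_nonneg hw S (mem_filter.1 hS).1

lemma actProb_le_one (hw : ∀ e ∈ E, 0 ≤ w e ∧ w e ≤ 1) : actProb w E X v ≤ 1 := by
  classical
  exact sum_liveP w E ▸ sum_le_sum_of_subset_of_nonneg (filter_subset _ _)
    fun S hS _ => liveP_nonneg hw S hS

lemma actProb_eq_one_iff (hw : ∀ e ∈ E, 0 < w e ∧ w e ≤ 1) :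
    actProb w E X v = 1 ↔ v ∈ reach (↑(E.filter (fun e => w e = 1)) : Set (V × V)) X := by
  classical
  have hw0 : ∀ e ∈ E, w e ≠ 0 := fun e he => (hw e he).1.ne'
  conv_lhs => rw [actProb, ← sum_liveP w E]
  rw [sum_filter_eq_sum_iff_of_nonneg _ (liveP_nonneg fun e he => ⟨(hw e he).1.le, (hw e he).2⟩)]
  constructor
  · intro h
    exact h _ (mem_powerset.2 (filter_subset _ _))
      ((liveP_ne_zero_iff hw0 (filter_subset _ _)).2 subset_rfl)
  · intro hv S hS hne
    exact reach_mono (coe_subset.2 ((liveP_ne_zero_iff hw0 (mem_powerset.1 hS)).1 hne)) X hv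

lemma actProb_eq_zero_iff (hw : ∀ e ∈ E, 0 < w e ∧ w e ≤ 1) :
    actProb w E X v = 0 ↔ v ∉ reach (↑E : Set (V × V)) X := by
  classical
  have hw0 : ∀ e ∈ E, w e ≠ 0 := fun e he => (hw e he).1.ne'
  rw [actProb, sum_filter_eq_zero_iff_of_nonneg _
    (liveP_nonneg fun e he => ⟨(hw e he).1.le, (hw e he).2⟩)]
  constructor
  · intro h
    exact h E (mem_powerset_self E) ((liveP_ne_zero_iff hw0 subset_rfl).2 (filter_subset _ _))
  · intro hv S hS _ hvS
    exact hv (reach_mono (coe_subset.2 (mem_powerset.1 hS)) X hvS)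

end ActProb

/-- The cost is zero iff all targets are reached deterministically
and nothing outside the target set is reachable at all. -/
theorem cost_eq_zero_iff {V : Type*} [Fintype V] [DecidableEq V]
    (E : Finset (V × V)) (w : V × V → ℚ)
    (hw : ∀ e ∈ E, 0 < w e ∧ w e ≤ 1)
    (A : Finset V) (X : Set V) :
    cost w E A X = 0 ↔
      ((↑A : Set V) ⊆ reach (↑(E.filter (fun e => w e = 1)) : Set (V × V)) X ∧
       reach (↑E : Set (V × V)) X ⊆ (↑A : Set V)) := by
  have hw' : ∀ e ∈ E, 0 ≤ w e ∧ w e ≤ 1 := fun e he => ⟨(hw e he).1.le, (hw e he).2⟩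
  have hmiss : ∀ v ∈ A, 0 ≤ 1 - actProb w E X v :=
    fun v _ => sub_nonneg.2 (actProb_le_one X v hw')
  have hspill : ∀ v ∈ Aᶜ, 0 ≤ actProb w E X v := fun v _ => actProb_nonneg X v hw'
  rw [cost, add_eq_zero_iff_of_nonneg (sum_nonneg hmiss) (sum_nonneg hspill),
    sum_eq_zero_iff_of_nonneg hmiss, sum_eq_zero_iff_of_nonneg hspill]
  simp only [sub_eq_zero, eq_comm (a := (1 : ℚ)), actProb_eq_one_iff X _ hw,
    actProb_eq_zero_iff X _ hw, mem_compl]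
  exact and_congr Iff.rfl (forall_congr' fun _ => not_imp_not)
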